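/- arXiv:2209.10841 — 2 statements merged into one kernel-verified Lean document; each statement's English description precedes it below -/
import Mathlib

section
/- Riemann sum error bound: let K : ℝ → ℝ be Lipschitz with constant C_K and supported on [-1,1], let u ∈ [0,1], 0 < h ≤ 1/2, and ℓ ∈ ℕ. Define f(w) = K((w-u)/h)·((w-u)/h)^ℓ. Then |(1/(Th)) ∑_{t=1}^T f(t/T) - (1/h) ∫_0^1 f(w) dw| ≤ C/(Th), where C depends only on C_K, sup|K| and ℓ. -/
private lemma aux_pow_lip (ℓ : ℕ) : ∀ a b : ℝ, |a| ≤ 1 → |b| ≤ 1 →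
    |a ^ ℓ - b ^ ℓ| ≤ ℓ * |a - b| := by
  induction ℓ with
  | zero => intro a b _ _; simp
  | succ n ih =>
    intro a b ha hb
    have h1 : a ^ (n+1) - b ^ (n+1) = a * (a ^ n - b ^ n) + (a - b) * b ^ n := by ring
    have hbn : |b ^ n| ≤ 1 := by
      rw [abs_pow]; exact pow_le_one₀ (abs_nonneg b) hb
    calc |a ^ (n+1) - b ^ (n+1)| ≤ |a * (a^n - b^n)| + |(a-b)*b^n| := by
          rw [h1]; exact abs_add_le _ _
      _ = |a| * |a^n - b^n| + |a-b| * |b^n| := by rw [abs_mul, abs_mul]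
      _ ≤ 1 * ((n:ℝ) * |a-b|) + |a-b| * 1 :=
          add_le_add (mul_le_mul ha (ih a b ha hb) (abs_nonneg _) zero_le_one)
            (mul_le_mul_of_nonneg_left hbn (abs_nonneg _))
      _ = ((n+1 : ℕ):ℝ) * |a-b| := by push_cast; ring

private lemma aux_clamp_lip : ∀ x y : ℝ,
    |max (min 1 x) (-1) - max (min 1 y) (-1)| ≤ |x - y| := by
  intro x y
  refine le_trans (abs_max_sub_max_le_abs _ _ _) ?_
  have h2 : min 1 x = -max (-1) (-x) := by rw [← min_neg_neg]; norm_num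
  have h3 : min 1 y = -max (-1) (-y) := by rw [← min_neg_neg]; norm_num
  rw [h2, h3]
  have h4 := abs_max_sub_max_le_abs (-x) (-y) (-1)
  calc |-max (-1) (-x) - -max (-1) (-y)| = |max (-x) (-1) - max (-y) (-1)| := by
        rw [max_comm (-1) (-x), max_comm (-1) (-y), abs_sub_comm]; ring_nf
    _ ≤ |-x - -y| := h4
    _ = |x - y| := by rw [abs_sub_comm]; ring_nf

section
variable (K : ℝ → ℝ) (CK B : ℝ) (ℓ : ℕ)
    (hLip : ∀ x y : ℝ, |K x - K y| ≤ CK * |x - y|)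
    (hBound : ∀ x : ℝ, |K x| ≤ B)
    (hSupp : ∀ x : ℝ, 1 < |x| → K x = 0)

include hLip hSupp in
private lemma aux_K_zero : ∀ x : ℝ, 1 ≤ |x| → K x = 0 := by
  have hCK0 : 0 ≤ CK := by
    have h1 := hLip 0 1
    have h2 := abs_nonneg (K 0 - K 1)
    simp only [zero_sub, abs_neg, abs_one, mul_one] at h1
    linarith
  intro x hx
  rcases eq_or_lt_of_le hx with hx1 | hx1
  · -- |x| = 1
    have key : ∀ ε : ℝ, 0 < ε → |K x| ≤ CK * ε := by
      intro ε hε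
      have hy : 1 < |x * (1 + ε)| := by
        rw [abs_mul, ← hx1]
        have : (1:ℝ) < |1 + ε| := by rw [abs_of_pos (by linarith)]; linarith
        nlinarith
      have := hLip x (x * (1 + ε))
      rw [hSupp _ hy, sub_zero] at this
      have hxe : |x - x * (1+ε)| = ε := by
        have : x - x * (1+ε) = -(x * ε) := by ring
        rw [this, abs_neg, abs_mul, ← hx1, one_mul, abs_of_pos hε]
      rw [hxe] at this; exact this
    by_contra hc
    have hpos : 0 < |K x| := abs_pos.mpr hc
    have := key (|K x| / (2 * (CK + 1))) (by positivity)
    have h5 : CK * (|K x| / (2 * (CK + 1))) < |K x| := by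
      rw [div_eq_mul_inv, ← mul_assoc]
      rw [mul_inv_lt_iff₀ (by positivity)]
      nlinarith
    linarith
  · exact hSupp x hx1
end

section
variable (K : ℝ → ℝ) (CK B : ℝ) (ℓ : ℕ)
    (hLip : ∀ x y : ℝ, |K x - K y| ≤ CK * |x - y|)
    (hBound : ∀ x : ℝ, |K x| ≤ B)
    (hSupp : ∀ x : ℝ, 1 < |x| → K x = 0)

include hLip hSupp in
private lemma aux_g_zero : ∀ x : ℝ, 1 ≤ |x| → K x * x ^ ℓ = 0 := by
  intro x hx; rw [aux_K_zero K CK hLip hSupp x hx, zero_mul]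

include hBound hSupp in
private lemma aux_g_bound : ∀ x : ℝ, |K x * x ^ ℓ| ≤ B := by
  have hB0 : 0 ≤ B := le_trans (abs_nonneg _) (hBound 0)
  intro x
  rcases le_or_gt (|x|) 1 with hx | hx
  · rw [abs_mul]
    calc |K x| * |x ^ ℓ| ≤ B * 1 := by
          refine mul_le_mul (hBound x) ?_ (abs_nonneg _) hB0
          rw [abs_pow]; exact pow_le_one₀ (abs_nonneg x) hx
      _ = B := mul_one B
  · rw [hSupp x hx, zero_mul, abs_zero]; exact hB0

include hLip hBound hSupp in
private lemma aux_g_lip : ∀ x y : ℝ,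
    |K x * x ^ ℓ - K y * y ^ ℓ| ≤ (CK + B * ℓ) * |x - y| := by
  have hB0 : 0 ≤ B := le_trans (abs_nonneg _) (hBound 0)
  have hK0 := aux_K_zero K CK hLip hSupp
  -- Lipschitz on [-1,1]
  have core : ∀ a b : ℝ, |a| ≤ 1 → |b| ≤ 1 →
      |K a * a ^ ℓ - K b * b ^ ℓ| ≤ (CK + B * ℓ) * |a - b| := by
    intro a b ha hb
    have h1 : K a * a ^ ℓ - K b * b ^ ℓ
        = K a * (a ^ ℓ - b ^ ℓ) + (K a - K b) * b ^ ℓ := by ring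
    have hbn : |b ^ ℓ| ≤ 1 := by rw [abs_pow]; exact pow_le_one₀ (abs_nonneg b) hb
    calc |K a * a ^ ℓ - K b * b ^ ℓ|
        ≤ |K a * (a ^ ℓ - b ^ ℓ)| + |(K a - K b) * b ^ ℓ| := by rw [h1]; exact abs_add_le _ _
      _ = |K a| * |a ^ ℓ - b ^ ℓ| + |K a - K b| * |b ^ ℓ| := by rw [abs_mul, abs_mul]
      _ ≤ B * (ℓ * |a - b|) + (CK * |a - b|) * 1 :=
          add_le_add (mul_le_mul (hBound a) (aux_pow_lip ℓ a b ha hb)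
              (abs_nonneg _) hB0)
            (mul_le_mul (hLip a b) hbn (abs_nonneg _)
              (le_trans (abs_nonneg _) (hLip a b)))
      _ = (CK + B * ℓ) * |a - b| := by ring
  -- clamp
  have gp : ∀ x : ℝ, K x * x ^ ℓ
      = K (max (min 1 x) (-1)) * (max (min 1 x) (-1)) ^ ℓ := by
    intro x
    rcases le_or_gt x (-1) with hx | hx
    · have hp : max (min 1 x) (-1) = -1 := by
        rw [min_eq_right (by linarith), max_eq_right hx]
      rw [hp]
      rcases eq_or_lt_of_le hx with hx1 | hx1
      · rw [hx1]
      · rw [hSupp x (by rw [abs_of_neg (by linarith)]; linarith),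
          hK0 (-1) (by rw [abs_neg, abs_one]), zero_mul, zero_mul]
    rcases le_or_gt x 1 with hx2 | hx2
    · have hp : max (min 1 x) (-1) = x := by
        rw [min_eq_right hx2, max_eq_left (by linarith)]
      rw [hp]
    · have hp : max (min 1 x) (-1) = 1 := by
        rw [min_eq_left (by linarith)]; norm_num
      have hx3 : (1:ℝ) < |x| := by rw [abs_of_pos (by linarith)]; exact hx2
      rw [hp, hSupp x hx3, hK0 1 (by norm_num), zero_mul, zero_mul]
  intro x y
  have hpx : |max (min 1 x) (-1)| ≤ 1 := by
    rw [abs_le]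
    constructor
    · exact le_max_right _ _
    · exact max_le (min_le_left _ _) (by norm_num)
  have hpy : |max (min 1 y) (-1)| ≤ 1 := by
    rw [abs_le]
    constructor
    · exact le_max_right _ _
    · exact max_le (min_le_left _ _) (by norm_num)
  rw [gp x, gp y]
  refine le_trans (core _ _ hpx hpy) ?_
  have hCK0 : 0 ≤ CK := by
    have h1 := hLip 0 1
    have h2 := abs_nonneg (K 0 - K 1)
    simp only [zero_sub, abs_neg, abs_one, mul_one] at h1
    linarith
  exact mul_le_mul_of_nonneg_left (aux_clamp_lip x y) (by positivity)
end

theorem riemann_sum_kernel_error (K : ℝ → ℝ) (CK B : ℝ) (ℓ : ℕ)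
    (hLip : ∀ x y : ℝ, |K x - K y| ≤ CK * |x - y|)
    (hBound : ∀ x : ℝ, |K x| ≤ B)
    (hSupp : ∀ x : ℝ, 1 < |x| → K x = 0) :
    ∃ C : ℝ, ∀ (T : ℕ), 1 ≤ T → ∀ u ∈ Set.Icc (0:ℝ) 1, ∀ h : ℝ, 0 < h → h ≤ 1/2 →
      |(1 / ((T : ℝ) * h)) *
          ∑ t ∈ Finset.Icc 1 T, K (((t : ℝ) / T - u) / h) * (((t : ℝ) / T - u) / h) ^ ℓ
        - (1 / h) * ∫ w in (0:ℝ)..1, K ((w - u) / h) * ((w - u) / h) ^ ℓ|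
      ≤ C / ((T : ℝ) * h) := by
  have hB0 : 0 ≤ B := le_trans (abs_nonneg _) (hBound 0)
  have hCK0 : 0 ≤ CK := by
    have h1 := hLip 0 1
    have h2 := abs_nonneg (K 0 - K 1)
    simp only [zero_sub, abs_neg, abs_one, mul_one] at h1
    linarith
  set L : ℝ := CK + B * ℓ with hLdef
  have hL0 : 0 ≤ L := by positivity
  have hKc : Continuous K := by
    have : LipschitzWith (Real.toNNReal CK) K := by
      apply LipschitzWith.of_dist_le_mul
      intro x y
      rw [Real.dist_eq, Real.dist_eq, Real.coe_toNNReal CK hCK0]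
      exact hLip x y
    exact this.continuous
  refine ⟨4 * L + 8 * B, ?_⟩
  intro T hT u hu h hh hh2
  obtain ⟨hu0, hu1⟩ := hu
  have hT1 : (1:ℝ) ≤ (T:ℝ) := by exact_mod_cast hT
  have hT0 : (0:ℝ) < (T:ℝ) := lt_of_lt_of_le one_pos hT1
  set f : ℝ → ℝ := fun w => K ((w - u) / h) * ((w - u) / h) ^ ℓ with hfdef
  have hf_lip : ∀ w v : ℝ, |f w - f v| ≤ L / h * |w - v| := by
    intro w v
    have h1 := aux_g_lip K CK B ℓ hLip hBound hSupp ((w - u)/h) ((v - u)/h)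
    have heq : (w - u)/h - (v - u)/h = (w - v)/h := by ring
    rw [heq, abs_div, abs_of_pos hh] at h1
    calc |f w - f v| ≤ L * (|w - v| / h) := h1
      _ = L / h * |w - v| := by ring
  have hf_zero : ∀ w : ℝ, h ≤ |w - u| → f w = 0 := by
    intro w hw
    apply aux_g_zero K CK ℓ hLip hSupp
    rw [abs_div, abs_of_pos hh, le_div_iff₀ hh, one_mul]
    exact hw
  have hf_bd : ∀ w : ℝ, |f w| ≤ B := fun w => aux_g_bound K B ℓ hBound hSupp _
  have hfc : Continuous f := by
    apply Continuous.mul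
    · exact hKc.comp (by continuity)
    · exact Continuous.pow (by continuity) ℓ
  have hfi : ∀ x y : ℝ, IntervalIntegrable f MeasureTheory.volume x y :=
    fun x y => hfc.intervalIntegrable x y
  set a : ℕ → ℝ := fun i => (i : ℝ) / T with hadef
  have ha_mono : ∀ i : ℕ, a i ≤ a (i + 1) := by
    intro i
    apply (div_le_div_iff_of_pos_right hT0).mpr
    push_cast; linarith
  have ha_step : ∀ i : ℕ, a (i + 1) - a i = 1 / T := by
    intro i
    simp only [hadef]
    push_cast
    field_simp
    ring
  -- the per-interval errors
  set e : ℕ → ℝ := fun i => ∫ w in a i..a (i + 1), (f (a (i + 1)) - f w) with hedef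
  have hsum : ∑ i ∈ Finset.range T, ∫ w in a i..a (i+1), f w = ∫ w in (0:ℝ)..1, f w := by
    rw [intervalIntegral.sum_integral_adjacent_intervals (fun k _ => hfi _ _)]
    have h0 : a 0 = 0 := by simp [hadef]
    have h1 : a T = 1 := by simp only [hadef]; exact div_self (ne_of_gt hT0)
    rw [h0, h1]
  have he : ∀ i : ℕ, e i = (1 / T) * f (a (i + 1)) - ∫ w in a i..a (i+1), f w := by
    intro i
    simp only [hedef]
    rw [intervalIntegral.integral_sub (intervalIntegrable_const) (hfi _ _),
      intervalIntegral.integral_const, smul_eq_mul, ha_step]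
  have hreindex : ∑ t ∈ Finset.Icc 1 T, f ((t : ℝ) / T)
      = ∑ i ∈ Finset.range T, f (a (i + 1)) := by
    have : Finset.Icc 1 T = Finset.Ico 1 (T + 1) := by
      rw [Finset.Ico_add_one_right_eq_Icc]
    rw [this, Finset.sum_Ico_eq_sum_range]
    simp only [Nat.add_sub_cancel]
    apply Finset.sum_congr rfl
    intro i _
    congr 1
    simp only [hadef]
    push_cast
    ring
  have goal_eq : (1 / ((T : ℝ) * h)) * ∑ t ∈ Finset.Icc 1 T, f ((t:ℝ)/T)
      - (1 / h) * ∫ w in (0:ℝ)..1, f w = (1 / h) * ∑ i ∈ Finset.range T, e i := by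
    have hsum2 : ∑ i ∈ Finset.range T, e i
        = (1 / T) * ∑ i ∈ Finset.range T, f (a (i + 1)) - ∫ w in (0:ℝ)..1, f w := by
      rw [← hsum, Finset.mul_sum, ← Finset.sum_sub_distrib]
      exact Finset.sum_congr rfl fun i _ => he i
    rw [hsum2, hreindex]
    field_simp
  -- the set of relevant indices
  set S : Finset ℕ := (Finset.range T).filter
    (fun i => u - h ≤ a (i + 1) ∧ a i ≤ u + h) with hSdef
  have hzero : ∀ i ∈ Finset.range T, e i ≠ 0 → (u - h ≤ a (i + 1) ∧ a i ≤ u + h) := by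
    intro i _ hne
    by_contra hiS
    apply hne
    push_neg at hiS
    have hEq : Set.EqOn (fun w => f (a (i + 1)) - f w) 0 (Set.uIcc (a i) (a (i+1))) := by
      intro w hw
      rw [Set.uIcc_of_le (ha_mono i), Set.mem_Icc] at hw
      rcases lt_or_ge (a (i+1)) (u - h) with hc | hc
      · have hw1 : f w = 0 := by
          apply hf_zero
          rw [abs_of_nonpos (by linarith [hw.2])]
          linarith [hw.2]
        have hw2 : f (a (i+1)) = 0 := by
          apply hf_zero
          rw [abs_of_nonpos (by linarith)]
          linarith
        simp [hw1, hw2]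
      · have hc2 : u + h < a i := hiS hc
        have hw1 : f w = 0 := by
          apply hf_zero
          rw [abs_of_nonneg (by linarith [hw.1])]
          linarith [hw.1]
        have hw2 : f (a (i+1)) = 0 := by
          apply hf_zero
          rw [abs_of_nonneg (by linarith [ha_mono i])]
          linarith [ha_mono i]
        simp [hw1, hw2]
    simp only [hedef]
    rw [intervalIntegral.integral_congr hEq]
    simp
  have habs : |∑ i ∈ Finset.range T, e i| ≤ ∑ i ∈ S, |e i| := by
    rw [hSdef]
    conv_lhs => rw [← Finset.sum_filter_of_ne hzero]
    exact Finset.abs_sum_le_sum_abs _ _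
  -- cardinality bound
  have hcard : (S.card : ℝ) ≤ 2 * h * T + 2 := by
    rcases Finset.eq_empty_or_nonempty S with hS | hS
    · rw [hS]; simp; positivity
    set a' : ℕ := Nat.ceil ((T:ℝ) * (u - h) - 1) with ha'
    set b' : ℕ := Nat.floor ((T:ℝ) * (u + h)) with hb'
    have hmem : ∀ i ∈ S, a' ≤ i ∧ i ≤ b' := by
      intro i hi
      rw [hSdef, Finset.mem_filter] at hi
      obtain ⟨_, h1, h2⟩ := hi
      constructor
      · apply Nat.ceil_le.mpr
        simp only [hadef] at h1
        rw [le_div_iff₀ hT0] at h1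
        push_cast at h1
        linarith
      · apply Nat.le_floor
        simp only [hadef] at h2
        rw [div_le_iff₀ hT0] at h2
        linarith [h2]
    have hsub : S ⊆ Finset.Icc a' b' := by
      intro i hi
      rw [Finset.mem_Icc]
      exact hmem i hi
    obtain ⟨i₀, hi₀⟩ := hS
    have hab : a' ≤ b' := le_trans (hmem i₀ hi₀).1 (hmem i₀ hi₀).2
    have hc1 : S.card ≤ (Finset.Icc a' b').card := Finset.card_le_card hsub
    rw [Nat.card_Icc] at hc1
    have hc2 : (S.card : ℝ) ≤ (b' : ℝ) + 1 - a' := by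
      have := Nat.cast_le (α := ℝ) |>.mpr hc1
      rwa [Nat.cast_sub (by omega), Nat.cast_add, Nat.cast_one] at this
    have hb'le : (b' : ℝ) ≤ (T:ℝ) * (u + h) := Nat.floor_le (by positivity)
    have ha'ge : (T:ℝ) * (u - h) - 1 ≤ (a' : ℝ) := Nat.le_ceil _
    calc (S.card : ℝ) ≤ (b' : ℝ) + 1 - a' := hc2
      _ ≤ (T:ℝ) * (u + h) + 1 - ((T:ℝ) * (u - h) - 1) := by linarith
      _ = 2 * h * T + 2 := by ring
  -- per-term bounds
  have hterm : ∀ (c : ℝ), 0 ≤ c → (∀ w, w ∈ Set.uIoc (a 0) (a 1) → True) → True := fun _ _ _ => trivial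
  have hbound1 : ∀ i : ℕ, |e i| ≤ L / h * (1 / T) * (1 / T) := by
    intro i
    have key : ∀ w ∈ Set.uIoc (a i) (a (i+1)),
        ‖f (a (i + 1)) - f w‖ ≤ L / h * (1 / T) := by
      intro w hw
      rw [Set.uIoc_of_le (ha_mono i), Set.mem_Ioc] at hw
      rw [Real.norm_eq_abs]
      calc |f (a (i + 1)) - f w| ≤ L / h * |a (i + 1) - w| := hf_lip _ _
        _ ≤ L / h * (1 / T) := by
            apply mul_le_mul_of_nonneg_left _ (by positivity)
            rw [abs_of_nonneg (by linarith [hw.2])]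
            linarith [hw.1, ha_step i]
    have := intervalIntegral.norm_integral_le_of_norm_le_const key
    rw [Real.norm_eq_abs] at this
    calc |e i| ≤ L / h * (1 / T) * |a (i+1) - a i| := this
      _ = L / h * (1 / T) * (1 / T) := by rw [ha_step i, abs_of_nonneg (by positivity)]
  have hbound2 : ∀ i : ℕ, |e i| ≤ 2 * B * (1 / T) := by
    intro i
    have key : ∀ w ∈ Set.uIoc (a i) (a (i+1)),
        ‖f (a (i + 1)) - f w‖ ≤ 2 * B := by
      intro w _
      rw [Real.norm_eq_abs]
      calc |f (a (i + 1)) - f w| ≤ |f (a (i+1))| + |f w| := abs_sub _ _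
        _ ≤ B + B := add_le_add (hf_bd _) (hf_bd _)
        _ = 2 * B := by ring
    have := intervalIntegral.norm_integral_le_of_norm_le_const key
    rw [Real.norm_eq_abs] at this
    calc |e i| ≤ 2 * B * |a (i+1) - a i| := this
      _ = 2 * B * (1 / T) := by rw [ha_step i, abs_of_nonneg (by positivity)]
  -- conclude
  have hmain : |(1 / ((T : ℝ) * h)) * ∑ t ∈ Finset.Icc 1 T, f ((t:ℝ)/T)
      - (1 / h) * ∫ w in (0:ℝ)..1, f w| ≤ (4 * L + 8 * B) / ((T:ℝ) * h) := by
    rw [goal_eq, abs_mul, abs_of_pos (by positivity : (0:ℝ) < 1 / h)]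
    rcases le_or_gt 1 ((T:ℝ) * h) with hTh | hTh
    · calc 1 / h * |∑ i ∈ Finset.range T, e i|
          ≤ 1 / h * ∑ i ∈ S, |e i| :=
            mul_le_mul_of_nonneg_left habs (by positivity)
        _ ≤ 1 / h * ((S.card : ℝ) * (L / h * (1 / T) * (1 / T))) := by
            apply mul_le_mul_of_nonneg_left _ (by positivity)
            have := Finset.sum_le_card_nsmul S _ _ (fun i _ => hbound1 i)
            rwa [nsmul_eq_mul] at this
        _ ≤ 1 / h * ((2 * h * T + 2) * (L / h * (1 / T) * (1 / T))) := by
            apply mul_le_mul_of_nonneg_left _ (by positivity)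
            apply mul_le_mul_of_nonneg_right hcard (by positivity)
        _ ≤ (4 * L + 8 * B) / ((T:ℝ) * h) := by
            rw [← sub_nonneg]
            have hq : (4 * L + 8 * B) / ((T:ℝ) * h)
                - 1 / h * ((2 * h * T + 2) * (L / h * (1 / T) * (1 / T)))
                = (2 * L * ((T:ℝ) * h - 1) + 8 * B * ((T:ℝ) * h)) / ((T:ℝ) * h * ((T:ℝ) * h)) := by
              field_simp
              ring
            rw [hq]
            apply div_nonneg _ (by positivity)
            have := sub_nonneg.mpr hTh
            positivity
    · calc 1 / h * |∑ i ∈ Finset.range T, e i|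
          ≤ 1 / h * ∑ i ∈ S, |e i| :=
            mul_le_mul_of_nonneg_left habs (by positivity)
        _ ≤ 1 / h * ((S.card : ℝ) * (2 * B * (1 / T))) := by
            apply mul_le_mul_of_nonneg_left _ (by positivity)
            have := Finset.sum_le_card_nsmul S _ _ (fun i _ => hbound2 i)
            rwa [nsmul_eq_mul] at this
        _ ≤ 1 / h * ((2 * h * T + 2) * (2 * B * (1 / T))) := by
            apply mul_le_mul_of_nonneg_left _ (by positivity)
            apply mul_le_mul_of_nonneg_right hcard (by positivity)
        _ ≤ (4 * L + 8 * B) / ((T:ℝ) * h) := by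
            rw [← sub_nonneg]
            have hq : (4 * L + 8 * B) / ((T:ℝ) * h)
                - 1 / h * ((2 * h * T + 2) * (2 * B * (1 / T)))
                = (4 * L + 4 * B * (1 - (T:ℝ) * h)) / ((T:ℝ) * h) := by
              field_simp
              ring
            rw [hq]
            apply div_nonneg _ (by positivity)
            have h1 : 0 ≤ 1 - (T:ℝ) * h := by linarith
            positivity
  exact hmain
end

section
/- Under the separation condition, hierarchical agglomerative clustering with complete linkage recovers the true groups: starting from singletons and merging at each step the pair of clusters with minimal complete-linkage dissimilarity, after n - N merge steps the resulting partition equals {G_1,...,G_N}. -/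
/-!
Complete linkage only ever merges two clusters lying in a common group. Indeed, as long as
there are more clusters than groups, two of them lie in the same group, and by the separation
condition their linkage (a within-group dissimilarity) is strictly below the linkage of any two
clusters lying in different groups. So every intermediate partition refines `{G_1, …, G_N}`;
after `n - N` merges it has `N` parts, and a refinement with as many parts is the partition itself.
-/

/-- Complete linkage dissimilarity between two sets of indices. -/
noncomputable def completeLinkage (n : ℕ) (d : Fin n → Fin n → ℝ)
    (S S' : Finset (Fin n)) : ℝ :=
  sSup {x : ℝ | ∃ i ∈ S, ∃ j ∈ S', x = d i j}

/-- One step of hierarchical agglomerative clustering with complete linkage: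
`Q` is obtained from `P` by merging a pair of distinct clusters minimizing
the complete-linkage dissimilarity. -/
noncomputable def hacStep (n : ℕ) (d : Fin n → Fin n → ℝ)
    (P Q : Finset (Finset (Fin n))) : Prop :=
  ∃ A ∈ P, ∃ B ∈ P, A ≠ B ∧
    (∀ A' ∈ P, ∀ B' ∈ P, A' ≠ B' →
      completeLinkage n d A B ≤ completeLinkage n d A' B') ∧
    Q = insert (A ∪ B) ((P.erase A).erase B)

open Finset

section Partition

variable {α ι : Type*}

structure IsFinsetPartition (Q : Finset (Finset α)) : Prop where
  nonempty : ∀ A ∈ Q, A.Nonempty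
  disjoint : ∀ A ∈ Q, ∀ B ∈ Q, A ≠ B → Disjoint A B
  cover : ∀ i, ∃ A ∈ Q, i ∈ A

def Refines (Q R : Finset (Finset α)) : Prop :=
  ∀ A ∈ Q, ∃ C ∈ R, A ⊆ C

def mergeParts [DecidableEq α] (Q : Finset (Finset α)) (A B : Finset α) :
    Finset (Finset α) :=
  insert (A ∪ B) ((Q.erase A).erase B)

theorem mem_mergeParts [DecidableEq α] {Q : Finset (Finset α)} {A B X : Finset α} :
    X ∈ mergeParts Q A B ↔ X = A ∪ B ∨ X ∈ Q ∧ X ≠ A ∧ X ≠ B := by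
  simp only [mergeParts, mem_insert, mem_erase]
  tauto

namespace IsFinsetPartition

variable {Q R : Finset (Finset α)}

theorem eq_of_mem_of_mem (hQ : IsFinsetPartition Q) {A B : Finset α} (hA : A ∈ Q) (hB : B ∈ Q)
    {x : α} (hxA : x ∈ A) (hxB : x ∈ B) : A = B := by
  by_contra hAB
  exact disjoint_left.1 (hQ.disjoint A hA B hB hAB) hxA hxB

theorem singletons [Fintype α] [DecidableEq α] :
    IsFinsetPartition (univ.image fun i : α => ({i} : Finset α)) where
  nonempty := by
    simp only [mem_image, mem_univ, true_and]
    rintro _ ⟨i, rfl⟩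
    exact singleton_nonempty i
  disjoint := by
    simp only [mem_image, mem_univ, true_and]
    rintro _ ⟨i, rfl⟩ _ ⟨j, rfl⟩ hij
    exact disjoint_singleton.2 fun h => hij (h ▸ rfl)
  cover i := ⟨{i}, mem_image_of_mem _ (mem_univ i), mem_singleton_self i⟩

theorem card_le [Fintype α] (hQ : IsFinsetPartition Q) : Q.card ≤ Fintype.card α := by
  choose x hx using hQ.nonempty
  have hinj : Function.Injective fun A : Q => x A.1 A.2 := fun A B (hAB : x A.1 A.2 = x B.1 B.2) =>
    Subtype.ext (hQ.eq_of_mem_of_mem A.2 B.2 (hx A.1 A.2) (hAB ▸ hx B.1 B.2))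
  simpa using Fintype.card_le_of_injective _ hinj

theorem mergeParts [DecidableEq α] (hQ : IsFinsetPartition Q) {A B : Finset α}
    (hA : A ∈ Q) (hB : B ∈ Q) : IsFinsetPartition (_root_.mergeParts Q A B) where
  nonempty X hX := by
    rcases mem_mergeParts.1 hX with rfl | ⟨hX, -⟩
    · exact (hQ.nonempty A hA).mono subset_union_left
    · exact hQ.nonempty X hX
  disjoint X hX Y hY hXY := by
    rcases mem_mergeParts.1 hX with rfl | ⟨hX, hXA, hXB⟩ <;>
      rcases mem_mergeParts.1 hY with rfl | ⟨hY, hYA, hYB⟩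
    · exact absurd rfl hXY
    · exact disjoint_union_left.2
        ⟨hQ.disjoint A hA Y hY (Ne.symm hYA), hQ.disjoint B hB Y hY (Ne.symm hYB)⟩
    · exact disjoint_union_right.2 ⟨hQ.disjoint X hX A hA hXA, hQ.disjoint X hX B hB hXB⟩
    · exact hQ.disjoint X hX Y hY hXY
  cover i := by
    obtain ⟨X, hX, hiX⟩ := hQ.cover i
    by_cases hXAB : X = A ∨ X = B
    · refine ⟨A ∪ B, mem_mergeParts.2 (Or.inl rfl), ?_⟩
      rcases hXAB with rfl | rfl
      exacts [mem_union_left _ hiX, mem_union_right _ hiX]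
    · push Not at hXAB
      exact ⟨X, mem_mergeParts.2 (Or.inr ⟨hX, hXAB⟩), hiX⟩

theorem card_mergeParts [DecidableEq α] (hQ : IsFinsetPartition Q) {A B : Finset α}
    (hA : A ∈ Q) (hB : B ∈ Q) (hAB : A ≠ B) : (_root_.mergeParts Q A B).card = Q.card - 1 := by
  have hnotin : A ∪ B ∉ (Q.erase A).erase B := by
    intro h
    obtain ⟨-, hne, hmem⟩ := by simpa only [mem_erase] using h
    obtain ⟨a, ha⟩ := hQ.nonempty A hA
    exact hne (hQ.eq_of_mem_of_mem hmem hA (mem_union_left _ ha) ha)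
  have htwo : 1 < Q.card := one_lt_card.2 ⟨A, hA, B, hB, hAB⟩
  rw [_root_.mergeParts, card_insert_of_notMem hnotin,
    card_erase_of_mem (mem_erase.2 ⟨hAB.symm, hB⟩), card_erase_of_mem hA]
  omega

-- The map sending a part of `Q` to the part of `R` containing it is onto, hence injective by
-- counting, and injectivity forces every part to be equal to its image.
theorem eq_of_refines_of_card_le (hQ : IsFinsetPartition Q) (hR : IsFinsetPartition R)
    (hQR : Refines Q R) (hcard : Q.card ≤ R.card) : Q = R := by
  choose f hfR hsub using hQR
  have hsurj : ∀ C ∈ R, ∃ A, ∃ hA : A ∈ Q, f A hA = C := by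
    intro C hC
    obtain ⟨x, hx⟩ := hR.nonempty C hC
    obtain ⟨A, hA, hxA⟩ := hQ.cover x
    exact ⟨A, hA, hR.eq_of_mem_of_mem (hfR A hA) hC (hsub A hA hxA) hx⟩
  have hinj := inj_on_of_surj_on_of_card_le f hfR hsurj hcard
  have hfix : ∀ A (hA : A ∈ Q), f A hA = A := by
    refine fun A hA => Subset.antisymm (fun y hy => ?_) (hsub A hA)
    obtain ⟨A', hA', hyA'⟩ := hQ.cover y
    have hfA := hR.eq_of_mem_of_mem (hfR A' hA') (hfR A hA) (hsub A' hA' hyA') hy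
    exact hinj hA' hA hfA ▸ hyA'
  ext C
  refine ⟨fun hC => hfix C hC ▸ hfR C hC, fun hC => ?_⟩
  obtain ⟨A, hA, rfl⟩ := hsurj C hC
  exact (hfix A hA).symm ▸ hA

theorem image [Fintype ι] [DecidableEq α] {G : ι → Finset α} (hGne : ∀ k, (G k).Nonempty)
    (hdisj : ∀ k k', k ≠ k' → Disjoint (G k) (G k')) (hcover : ∀ i, ∃ k, i ∈ G k) :
    IsFinsetPartition (univ.image G) where
  nonempty := by
    simp only [mem_image, mem_univ, true_and]
    rintro _ ⟨k, rfl⟩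
    exact hGne k
  disjoint := by
    simp only [mem_image, mem_univ, true_and]
    rintro _ ⟨k, rfl⟩ _ ⟨k', rfl⟩ hkk'
    exact hdisj k k' fun h => hkk' (h ▸ rfl)
  cover i := by
    obtain ⟨k, hk⟩ := hcover i
    exact ⟨G k, mem_image_of_mem G (mem_univ k), hk⟩

end IsFinsetPartition

theorem injective_of_disjoint_of_nonempty {G : ι → Finset α} (hGne : ∀ k, (G k).Nonempty)
    (hdisj : ∀ k k', k ≠ k' → Disjoint (G k) (G k')) : Function.Injective G := fun k k' h => by
  by_contra hkk'
  obtain ⟨x, hx⟩ := hGne k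
  exact disjoint_left.1 (hdisj k k' hkk') hx (h ▸ hx)

namespace Refines

variable {Q R : Finset (Finset α)}

theorem singletons [Fintype α] [DecidableEq α] (hR : ∀ i, ∃ C ∈ R, i ∈ C) :
    Refines (univ.image fun i : α => ({i} : Finset α)) R := by
  simp only [Refines, mem_image, mem_univ, true_and, forall_exists_index, forall_apply_eq_imp_iff,
    singleton_subset_iff]
  exact hR

theorem mergeParts [DecidableEq α] (hQR : Refines Q R) {A B : Finset α}
    (hAB : ∃ C ∈ R, A ∪ B ⊆ C) : Refines (_root_.mergeParts Q A B) R := by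
  intro X hX
  rcases mem_mergeParts.1 hX with rfl | ⟨hX, -⟩
  exacts [hAB, hQR X hX]

theorem exists_ne_subset_of_card_lt (hQR : Refines Q R) (hcard : R.card < Q.card) :
    ∃ A ∈ Q, ∃ B ∈ Q, A ≠ B ∧ ∃ C ∈ R, A ⊆ C ∧ B ⊆ C := by
  choose f hfR hsub using hQR
  obtain ⟨A, -, B, -, hAB, hfAB⟩ := exists_ne_map_eq_of_card_lt_of_maps_to
    (s := Q.attach) (card_attach.symm ▸ hcard) (f := fun A => f A.1 A.2) fun A _ => hfR A.1 A.2
  exact ⟨A.1, A.2, B.1, B.2, fun h => hAB (Subtype.ext h), f A.1 A.2, hfR A.1 A.2, hsub A.1 A.2,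
    hfAB ▸ hsub B.1 B.2⟩

end Refines

end Partition

section Linkage

variable {n : ℕ} {d : Fin n → Fin n → ℝ}

theorem finite_linkageValues (S S' : Finset (Fin n)) :
    {x : ℝ | ∃ i ∈ S, ∃ j ∈ S', x = d i j}.Finite :=
  (Set.finite_range fun p : Fin n × Fin n => d p.1 p.2).subset
    (by rintro _ ⟨i, -, j, -, rfl⟩; exact ⟨(i, j), rfl⟩)

theorem le_completeLinkage {S S' : Finset (Fin n)} {i j : Fin n} (hi : i ∈ S) (hj : j ∈ S') :
    d i j ≤ completeLinkage n d S S' :=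
  le_csSup (finite_linkageValues S S').bddAbove ⟨i, hi, j, hj, rfl⟩

theorem exists_eq_completeLinkage {S S' : Finset (Fin n)} (hS : S.Nonempty) (hS' : S'.Nonempty) :
    ∃ i ∈ S, ∃ j ∈ S', completeLinkage n d S S' = d i j := by
  obtain ⟨i, hi⟩ := hS
  obtain ⟨j, hj⟩ := hS'
  have hne : {x : ℝ | ∃ i ∈ S, ∃ j ∈ S', x = d i j}.Nonempty := ⟨d i j, i, hi, j, hj, rfl⟩
  exact hne.csSup_mem (finite_linkageValues S S')

theorem completeLinkage_lt_completeLinkage {C C₁ C₂ A B A' B' : Finset (Fin n)}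
    (hsep : ∀ i ∈ C, ∀ j ∈ C, ∀ i' ∈ C₁, ∀ j' ∈ C₂, d i j < d i' j')
    (hA : A ⊆ C) (hB : B ⊆ C) (hA' : A' ⊆ C₁) (hB' : B' ⊆ C₂)
    (hAne : A.Nonempty) (hBne : B.Nonempty) (hA'ne : A'.Nonempty) (hB'ne : B'.Nonempty) :
    completeLinkage n d A B < completeLinkage n d A' B' := by
  obtain ⟨i, hi, j, hj, hij⟩ := exists_eq_completeLinkage (d := d) hAne hBne
  obtain ⟨i', hi'⟩ := hA'ne
  obtain ⟨j', hj'⟩ := hB'ne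
  calc completeLinkage n d A B = d i j := hij
    _ < d i' j' := hsep i (hA hi) j (hB hj) i' (hA' hi') j' (hB' hj')
    _ ≤ completeLinkage n d A' B' := le_completeLinkage hi' hj'

end Linkage

section Clustering

variable {n N : ℕ} {d : Fin n → Fin n → ℝ} {G : Fin N → Finset (Fin n)}

theorem hacStep_merges_within_group
    (hsep : ∀ k : Fin N, ∀ i ∈ G k, ∀ j ∈ G k, ∀ k₁ k₂ : Fin N, k₁ ≠ k₂ →
      ∀ i' ∈ G k₁, ∀ j' ∈ G k₂, d i j < d i' j')
    {Q Q' : Finset (Finset (Fin n))} (hQ : IsFinsetPartition Q) (hQG : Refines Q (univ.image G))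
    (hcard : N < Q.card) (hs : hacStep n d Q Q') :
    ∃ A ∈ Q, ∃ B ∈ Q, A ≠ B ∧ (∃ C ∈ univ.image G, A ∪ B ⊆ C) ∧ Q' = mergeParts Q A B := by
  obtain ⟨A, hA, B, hB, hAB, hmin, rfl⟩ := hs
  refine ⟨A, hA, B, hB, hAB, ?_, rfl⟩
  obtain ⟨C, hC, C', hC', hCC', _, hkC, hCk, hC'k⟩ :=
    hQG.exists_ne_subset_of_card_lt (card_image_le.trans_lt (by simpa using hcard))
  obtain ⟨k, -, rfl⟩ := mem_image.1 hkC
  simp only [Refines, mem_image, mem_univ, true_and, exists_exists_eq_and] at hQG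
  obtain ⟨kA, hAk⟩ := hQG A hA
  obtain ⟨kB, hBk⟩ := hQG B hB
  have hkAB : kA = kB := by
    by_contra hkAB
    have hlt := completeLinkage_lt_completeLinkage (d := d)
      (fun i hi j hj => hsep k i hi j hj kA kB hkAB) hCk hC'k hAk hBk
      (hQ.nonempty C hC) (hQ.nonempty C' hC') (hQ.nonempty A hA) (hQ.nonempty B hB)
    exact (hmin C hC C' hC' hCC').not_gt hlt
  exact ⟨G kA, mem_image_of_mem G (mem_univ kA), union_subset hAk (hkAB ▸ hBk)⟩

theorem hacStep_preserves_refinement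
    (hsep : ∀ k : Fin N, ∀ i ∈ G k, ∀ j ∈ G k, ∀ k₁ k₂ : Fin N, k₁ ≠ k₂ →
      ∀ i' ∈ G k₁, ∀ j' ∈ G k₂, d i j < d i' j')
    {Q Q' : Finset (Finset (Fin n))} (hQ : IsFinsetPartition Q) (hQG : Refines Q (univ.image G))
    (hcard : N < Q.card) (hs : hacStep n d Q Q') :
    IsFinsetPartition Q' ∧ Refines Q' (univ.image G) ∧ Q'.card = Q.card - 1 := by
  obtain ⟨A, hA, B, hB, hAB, hABG, rfl⟩ := hacStep_merges_within_group hsep hQ hQG hcard hs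
  exact ⟨hQ.mergeParts hA hB, hQG.mergeParts hABG, hQ.card_mergeParts hA hB hAB⟩

end Clustering

theorem hac_recovers_groups_general (n N : ℕ) (d : Fin n → Fin n → ℝ)
    (G : Fin N → Finset (Fin n))
    (hGne : ∀ k, (G k).Nonempty)
    (hdisj : ∀ k k', k ≠ k' → Disjoint (G k) (G k'))
    (hcover : ∀ i : Fin n, ∃ k, i ∈ G k)
    (hsep : ∀ k : Fin N, ∀ i ∈ G k, ∀ j ∈ G k, ∀ k₁ k₂ : Fin N, k₁ ≠ k₂ →
      ∀ i' ∈ G k₁, ∀ j' ∈ G k₂, d i j < d i' j')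
    (P : ℕ → Finset (Finset (Fin n)))
    (hP0 : P 0 = Finset.univ.image (fun i : Fin n => ({i} : Finset (Fin n))))
    (hstep : ∀ r < n - N, hacStep n d (P r) (P (r + 1))) :
    P (n - N) = Finset.univ.image G := by
  have hG : IsFinsetPartition (univ.image G) := .image hGne hdisj hcover
  have hGcard : (univ.image G).card = N := by
    rw [card_image_of_injective _ (injective_of_disjoint_of_nonempty hGne hdisj), card_fin]
  have hNn : N ≤ n := by simpa [hGcard] using hG.card_le
  have hinv : ∀ r ≤ n - N,
      IsFinsetPartition (P r) ∧ Refines (P r) (univ.image G) ∧ (P r).card = n - r := by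
    intro r hr
    induction r with
    | zero =>
      rw [hP0, card_image_of_injective _ singleton_injective, card_univ, Fintype.card_fin]
      exact ⟨.singletons, .singletons hG.cover, rfl⟩
    | succ r ih =>
      obtain ⟨hQ, hQG, hcard⟩ := ih (by omega)
      obtain ⟨hQ', hQG', hcard'⟩ :=
        hacStep_preserves_refinement hsep hQ hQG (by omega) (hstep r (by omega))
      exact ⟨hQ', hQG', by omega⟩
  obtain ⟨hQ, hQG, hcard⟩ := hinv (n - N) le_rfl
  exact hQ.eq_of_refines_of_card_le hG hQG (by omega)

theorem hac_recovers_groups (n N : ℕ) (d : Fin n → Fin n → ℝ)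
    (hsym : ∀ i j, d i j = d j i)
    (G : Fin N → Finset (Fin n))
    (hGne : ∀ k, (G k).Nonempty)
    (hdisj : ∀ k k', k ≠ k' → Disjoint (G k) (G k'))
    (hcover : ∀ i : Fin n, ∃ k, i ∈ G k)
    (hsep : ∀ k : Fin N, ∀ i ∈ G k, ∀ j ∈ G k, ∀ k₁ k₂ : Fin N, k₁ ≠ k₂ →
      ∀ i' ∈ G k₁, ∀ j' ∈ G k₂, d i j < d i' j')
    (P : ℕ → Finset (Finset (Fin n)))
    (hP0 : P 0 = Finset.univ.image (fun i : Fin n => ({i} : Finset (Fin n))))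
    (hstep : ∀ r < n - N, hacStep n d (P r) (P (r + 1))) :
    P (n - N) = Finset.univ.image G :=
  hac_recovers_groups_general n N d G hGne hdisj hcover hsep P hP0 hstep
end
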